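/- arXiv:0708.3389 — 6 statements merged into one kernel-verified Lean document; each statement's English description precedes it below -/
import Mathlib

section
/- Let (Z,ν) be a probability space and (A_n)_{n∈ℕ} a sequence of measurable subsets of Z such that there exists a constant c > 0 with ν(A_n ∩ A_m) ≤ c·ν(A_n)·ν(A_m) for all distinct integers n, m. Let A_∞ = ⋂_{n∈ℕ} ⋃_{k≥n} A_k. Then ν(A_∞) > 0 if and only if the series ∑_{n=0}^∞ ν(A_n) diverges. -/
/-!
The first Borel–Cantelli lemma gives one direction. For the other, Cauchy–Schwarz applied to the
counting function `∑ n ∈ F, 1_{A n}`, which vanishes off `⋃ n ∈ F, A n`, gives the Chung–Erdős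
inequality `(∑ ν (A n))² ≤ ν (⋃ A n) · ∑∑ ν (A n ∩ A m)`. Quasi-independence bounds the double sum
by `S + c S²` with `S = ∑ ν (A n)`, so whenever `S ≥ 1` the union has measure at least
`(1 + c)⁻¹`. A divergent series has such blocks in every tail, hence `ν (A_∞) ≥ (1 + c)⁻¹`.
-/

open MeasureTheory Filter Set

open scoped ENNReal

theorem sq_lintegral_mul_le {α : Type*} [MeasurableSpace α] {μ : Measure α} {f g : α → ℝ≥0∞}
    (hf : AEMeasurable f μ) (hg : AEMeasurable g μ) :
    (∫⁻ a, f a * g a ∂μ) ^ 2 ≤ (∫⁻ a, f a ^ 2 ∂μ) * ∫⁻ a, g a ^ 2 ∂μ := by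
  have h := pow_le_pow_left' (ENNReal.lintegral_mul_le_Lp_mul_Lq μ .two_two hf hg) 2
  have hsqrt (x : ℝ≥0∞) : (x ^ (1 / 2 : ℝ)) ^ 2 = x := by
    rw [← ENNReal.rpow_two, one_div, ENNReal.rpow_inv_rpow two_ne_zero]
  simpa only [Pi.mul_apply, mul_pow, hsqrt, ENNReal.rpow_two] using h

section ChungErdos

variable {Z ι : Type*} [MeasurableSpace Z] {μ : Measure Z} {A : ι → Set Z}

theorem lintegral_sq_sum_indicator_one (hA : ∀ n, MeasurableSet (A n)) (F : Finset ι) :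
    ∫⁻ z, (∑ n ∈ F, (A n).indicator 1 z) ^ 2 ∂μ = ∑ n ∈ F, ∑ m ∈ F, μ (A n ∩ A m) := by
  have hmeas (n m : ι) : Measurable ((A n ∩ A m).indicator (1 : Z → ℝ≥0∞)) :=
    measurable_one.indicator ((hA n).inter (hA m))
  have hsq (z : Z) : (∑ n ∈ F, (A n).indicator (1 : Z → ℝ≥0∞) z) ^ 2
      = ∑ n ∈ F, ∑ m ∈ F, (A n ∩ A m).indicator 1 z := by
    simp only [sq, Finset.sum_mul_sum, inter_indicator_one, Pi.mul_apply]
  simp_rw [hsq]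
  rw [lintegral_finsetSum _ fun n _ => Finset.measurable_sum _ fun m _ => hmeas n m]
  refine Finset.sum_congr rfl fun n _ => ?_
  rw [lintegral_finsetSum _ fun m _ => hmeas n m]
  exact Finset.sum_congr rfl fun m _ => lintegral_indicator_one ((hA n).inter (hA m))

theorem sq_sum_measure_le_measure_biUnion_mul (hA : ∀ n, MeasurableSet (A n)) (F : Finset ι) :
    (∑ n ∈ F, μ (A n)) ^ 2 ≤ μ (⋃ n ∈ F, A n) * ∑ n ∈ F, ∑ m ∈ F, μ (A n ∩ A m) := by
  set U := ⋃ n ∈ F, A n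
  have hU : MeasurableSet U := F.measurableSet_biUnion fun n _ => hA n
  set N : Z → ℝ≥0∞ := fun z => ∑ n ∈ F, (A n).indicator 1 z
  have hN : Measurable N := Finset.measurable_sum _ fun n _ => measurable_one.indicator (hA n)
  have hNU (z : Z) : N z * U.indicator 1 z = N z := by
    by_cases hz : z ∈ U
    · simp [hz]
    · rw [indicator_of_notMem hz, mul_zero, eq_comm]
      exact Finset.sum_eq_zero fun n hn =>
        indicator_of_notMem (fun h => hz (mem_biUnion hn h)) _
  have hUsq (z : Z) : U.indicator (1 : Z → ℝ≥0∞) z ^ 2 = U.indicator 1 z := by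
    by_cases hz : z ∈ U <;> simp [hz]
  calc (∑ n ∈ F, μ (A n)) ^ 2
      = (∫⁻ z, N z * U.indicator 1 z ∂μ) ^ 2 := by
        simp_rw [hNU, N]
        rw [lintegral_finsetSum _ fun n _ => measurable_one.indicator (hA n)]
        simp_rw [lintegral_indicator_one (hA _)]
    _ ≤ (∫⁻ z, N z ^ 2 ∂μ) * ∫⁻ z, U.indicator 1 z ^ 2 ∂μ :=
        sq_lintegral_mul_le hN.aemeasurable (measurable_one.indicator hU).aemeasurable
    _ = μ U * ∑ n ∈ F, ∑ m ∈ F, μ (A n ∩ A m) := by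
        simp_rw [hUsq]
        rw [lintegral_sq_sum_indicator_one hA, lintegral_indicator_one hU, mul_comm]

theorem sum_sum_measure_inter_le {c : ℝ≥0∞}
    (hquasi : Pairwise fun n m => μ (A n ∩ A m) ≤ c * μ (A n) * μ (A m)) (F : Finset ι) :
    ∑ n ∈ F, ∑ m ∈ F, μ (A n ∩ A m) ≤ ∑ n ∈ F, μ (A n) + c * (∑ n ∈ F, μ (A n)) ^ 2 := by
  classical
  have hrow (n : ι) (hn : n ∈ F) :
      ∑ m ∈ F, μ (A n ∩ A m) ≤ μ (A n) + ∑ m ∈ F, c * μ (A n) * μ (A m) := by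
    rw [← Finset.add_sum_erase _ _ hn, inter_self]
    refine add_le_add le_rfl ((Finset.sum_le_sum fun m hm => ?_).trans
      (Finset.sum_le_sum_of_subset (F.erase_subset n)))
    exact hquasi (Finset.ne_of_mem_erase hm).symm
  calc ∑ n ∈ F, ∑ m ∈ F, μ (A n ∩ A m)
      ≤ ∑ n ∈ F, (μ (A n) + ∑ m ∈ F, c * μ (A n) * μ (A m)) := Finset.sum_le_sum hrow
    _ = ∑ n ∈ F, μ (A n) + c * (∑ n ∈ F, μ (A n)) ^ 2 := by
        simp_rw [Finset.sum_add_distrib, sq, Finset.sum_mul_sum, Finset.mul_sum, mul_assoc]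

theorem inv_one_add_le_measure_biUnion [IsFiniteMeasure μ] (hA : ∀ n, MeasurableSet (A n))
    {c : ℝ≥0∞} (hquasi : Pairwise fun n m => μ (A n ∩ A m) ≤ c * μ (A n) * μ (A m))
    {F : Finset ι} (hF : 1 ≤ ∑ n ∈ F, μ (A n)) :
    (1 + c)⁻¹ ≤ μ (⋃ n ∈ F, A n) := by
  set S := ∑ n ∈ F, μ (A n)
  have hS0 : S ^ 2 ≠ 0 := pow_ne_zero 2 (one_pos.trans_le hF).ne'
  have hStop : S ^ 2 ≠ ∞ := ENNReal.pow_ne_top (ENNReal.sum_ne_top.2 fun n _ => measure_ne_top μ _)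
  have hsq_le : S ^ 2 * 1 ≤ S ^ 2 * ((1 + c) * μ (⋃ n ∈ F, A n)) :=
    calc S ^ 2 * 1 = S ^ 2 := mul_one _
      _ ≤ μ (⋃ n ∈ F, A n) * (S + c * S ^ 2) :=
          (sq_sum_measure_le_measure_biUnion_mul hA F).trans
            (by gcongr; exact sum_sum_measure_inter_le hquasi F)
      _ ≤ μ (⋃ n ∈ F, A n) * (S ^ 2 + c * S ^ 2) := by
          rw [sq]
          gcongr
          exact le_mul_of_one_le_left' hF
      _ = S ^ 2 * ((1 + c) * μ (⋃ n ∈ F, A n)) := by ring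
  have hone := (ENNReal.mul_le_mul_iff_right hS0 hStop).1 hsq_le
  refine (ENNReal.inv_le_iff_le_mul (fun _ => by simp) fun _ hU => ?_).2 hone
  simp [hU] at hone

end ChungErdos

theorem ENNReal.exists_one_le_sum_Ico {f : ℕ → ℝ≥0∞} (hf : ∀ n, f n ≠ ∞)
    (htop : ∑' n, f n = ∞) (M : ℕ) : ∃ N, 1 ≤ ∑ n ∈ Finset.Ico M N, f n := by
  have htail : ∑' n, f (n + M) = ∞ := by
    rw [← ENNReal.summable.sum_add_tsum_nat_add', ENNReal.add_eq_top] at htop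
    exact htop.resolve_left (ENNReal.sum_ne_top.2 fun n _ => hf n)
  rw [ENNReal.tsum_eq_iSup_nat] at htail
  obtain ⟨N, hN⟩ := lt_iSup_iff.1 (htail ▸ ENNReal.one_lt_top)
  refine ⟨M + N, ?_⟩
  rw [Finset.sum_Ico_eq_sum_range, Nat.add_sub_cancel_left]
  simpa only [add_comm M] using hN.le

theorem le_measure_limsup_atTop {α : Type*} [MeasurableSpace α] {μ : Measure α} [IsFiniteMeasure μ]
    {s : ℕ → Set α} (hs : ∀ n, MeasurableSet (s n)) {a : ℝ≥0∞}
    (h : ∀ n, a ≤ μ (⋃ k ≥ n, s k)) : a ≤ μ (limsup s atTop) := by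
  rw [limsup_eq_iInf_iSup_of_nat]
  simp only [iSup_eq_iUnion, iInf_eq_iInter]
  have hanti : Antitone fun n => ⋃ k ≥ n, s k :=
    fun m n hmn => biUnion_mono (fun k hk => hmn.trans hk) fun _ _ => subset_rfl
  rw [hanti.measure_iInter
    (fun n => (MeasurableSet.biUnion (to_countable _) fun k _ => hs k).nullMeasurableSet)
    ⟨0, measure_ne_top μ _⟩]
  exact le_iInf h

theorem quasi_independent_borel_cantelli_general
    {Z : Type*} [MeasurableSpace Z] (ν : Measure Z) [IsProbabilityMeasure ν]
    (A : ℕ → Set Z) (hA : ∀ n, MeasurableSet (A n))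
    (c : ℝ)
    (hquasi : ∀ n m : ℕ, n ≠ m →
      ν (A n ∩ A m) ≤ ENNReal.ofReal c * ν (A n) * ν (A m)) :
    0 < ν (⋂ n : ℕ, ⋃ k : ℕ, ⋃ _ : n ≤ k, A k) ↔ (∑' n : ℕ, ν (A n)) = ⊤ := by
  have hlimsup : limsup A atTop = ⋂ n : ℕ, ⋃ k : ℕ, ⋃ _ : n ≤ k, A k := by
    simp only [limsup_eq_iInf_iSup_of_nat, ge_iff_le, iInf_eq_iInter, iSup_eq_iUnion]
  rw [← hlimsup]
  refine ⟨fun hpos => by_contra fun hfin => hpos.ne' (measure_limsup_atTop_eq_zero hfin),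
    fun htop => ?_⟩
  have hpos : 0 < (1 + ENNReal.ofReal c)⁻¹ := ENNReal.inv_pos.2 (by simp)
  refine hpos.trans_le (le_measure_limsup_atTop hA fun M => ?_)
  obtain ⟨N, hN⟩ := ENNReal.exists_one_le_sum_Ico (fun n => measure_ne_top ν (A n)) htop M
  exact (inv_one_add_le_measure_biUnion hA hquasi hN).trans
    (measure_mono (iUnion₂_mono' fun n hn => ⟨n, (Finset.mem_Ico.1 hn).1, subset_rfl⟩))

/-- Quasi-independent Borel–Cantelli lemma: for a probability space `(Z, ν)` and measurable
sets `A n` with `ν (A n ∩ A m) ≤ c · ν (A n) · ν (A m)` for all distinct `n, m` (with `c > 0`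
a constant), the set `A_∞` of points belonging to infinitely many `A n` has positive measure
if and only if `∑ ν (A n)` diverges. -/
theorem quasi_independent_borel_cantelli
    {Z : Type*} [MeasurableSpace Z] (ν : Measure Z) [IsProbabilityMeasure ν]
    (A : ℕ → Set Z) (hA : ∀ n, MeasurableSet (A n))
    (c : ℝ) (hc : 0 < c)
    (hquasi : ∀ n m : ℕ, n ≠ m →
      ν (A n ∩ A m) ≤ ENNReal.ofReal c * ν (A n) * ν (A m)) :
    0 < ν (⋂ n : ℕ, ⋃ k : ℕ, ⋃ _ : n ≤ k, A k) ↔ (∑' n : ℕ, ν (A n)) = ⊤ :=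
  quasi_independent_borel_cantelli_general ν A hA c hquasi
end

section
/- Let (Z,μ) be a measured space with μ(Z) finite, I a set with a map i ↦ n_i to ℕ such that each I_n = {i ∈ I : n_i = n} is finite, and for each i ∈ I and ε > 0 a measurable set B_i(ε) ⊆ Z, non-decreasing in ε. Let f_1, f_2, f_3, f_4 : ℕ → (0,∞) and f_5 : (0,∞) → (0,∞). Assume there exists c ≥ 1 such that: (1) f_3 ≤ f_2; (2) 1/(f_5 ∘ f_2) ≤ f_4·f_1; (3) there exist c', c'' > 1 such that for all ε, ε' > 0 with ε' ≤ c'·ε one has f_5(ε') ≤ c''·f_5(ε); (4) for all n, (1/c)·f_1(n) ≤ Card(I_n) ≤ c·f_1(n); (5) for all i ∈ I and ε ∈ (0, f_2(n_i)], (1/c)·f_4(n_i)·f_5(ε) ≤ μ(B_i(ε)) ≤ c·f_4(n_i)·f_5(ε); (6) for each n, the sets B_i(f_2(n)) for i ∈ I_n are pairwise disjoint; (7) for all i, j ∈ I with n_i < n_j, if B_j(f_3(n_j)) ∩ B_i(f_3(n_i)) ≠ ∅ then B_j(f_2(n_j)) ⊆ B_i(c·f_3(n_i)). Let E be the set of points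 of Z belonging to B_i(f_3(n_i)) for infinitely many i. If ∑_{n=0}^∞ f_1(n)·f_4(n)·f_5(f_3(n)) diverges, then μ(E) > 0. -/
/-!
Write `𝒜 n` for the union of the balls `B i (f3 n)` of level `n`. Disjointness (6) together with
the bounds (4) and (5) makes `μ (𝒜 n)` comparable to `f1 n * f4 n * f5 (f3 n)`, so
`∑ μ (𝒜 n) = ∞`. For `m < n`, the level-`n` balls meeting `𝒜 m` are disjoint at radius `f2 n`
and, by (7), packed into the level-`m` balls of radius `c * f3 m`; counting them by volume and
using (2) and the doubling property (3) gives the quasi-independence bound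
`μ (𝒜 m ∩ 𝒜 n) ≤ C * μ (𝒜 m) * μ (𝒜 n)`. The Kochen–Stone form of the second Borel–Cantelli
lemma, which rests on the Cauchy–Schwarz inequality
`(∑ μ (A i))² ≤ μ (⋃ A i) * ∑∑ μ (A i ∩ A j)`, then gives `μ (limsup 𝒜) ≥ 1 / (1 + C)`.
-/

open MeasureTheory Filter
open scoped ENNReal

theorem exists_le_mul_of_doubling {f : ℝ → ℝ} {a b : ℝ} (ha : 1 < a) (hb : 0 ≤ b)
    (h : ∀ ε ε', 0 < ε → 0 < ε' → ε' ≤ a * ε → f ε' ≤ b * f ε) (c : ℝ) :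
    ∃ K, 0 ≤ K ∧ ∀ ε ε', 0 < ε → 0 < ε' → ε' ≤ c * ε → f ε' ≤ K * f ε := by
  have key : ∀ k : ℕ, ∀ ε ε', 0 < ε → 0 < ε' → ε' ≤ a ^ k * ε → f ε' ≤ b ^ (k + 1) * f ε := by
    intro k
    induction k with
    | zero =>
      intro ε ε' hε hε' hle
      rw [pow_zero, one_mul] at hle
      simpa using h ε ε' hε hε' (hle.trans (le_mul_of_one_le_left hε.le ha.le))
    | succ k ih =>
      intro ε ε' hε hε' hle
      have hε₁ : 0 < a ^ k * ε := by positivity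
      calc f ε' ≤ b * f (a ^ k * ε) := h _ _ hε₁ hε' (hle.trans_eq (by ring))
        _ ≤ b * (b ^ (k + 1) * f ε) := mul_le_mul_of_nonneg_left (ih _ _ hε hε₁ le_rfl) hb
        _ = b ^ (k + 2) * f ε := by ring
  obtain ⟨k, hk⟩ := pow_unbounded_of_one_lt c ha
  exact ⟨b ^ (k + 1), by positivity,
    fun ε ε' hε hε' hle => key k ε ε' hε hε' (hle.trans (by gcongr))⟩

section QuasiIndependence

variable {Ω ι : Type*} [MeasurableSpace Ω] {μ : Measure Ω}

theorem measureReal_biUnion_le_card_mul {s : Finset ι} {E : ι → Set Ω} {a : ℝ}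
    (ha : ∀ i ∈ s, μ.real (E i) ≤ a) : μ.real (⋃ i ∈ s, E i) ≤ s.card * a :=
  (measureReal_biUnion_finset_le s E).trans (by simpa using Finset.sum_le_card_nsmul s _ a ha)

theorem sq_sum_measure_le_measure_biUnion_mul_sum_measure_inter (s : Finset ι) {A : ι → Set Ω}
    (hA : ∀ i ∈ s, MeasurableSet (A i)) :
    (∑ i ∈ s, μ (A i)) ^ 2 ≤ μ (⋃ i ∈ s, A i) * ∑ i ∈ s, ∑ j ∈ s, μ (A i ∩ A j) := by
  set U := ⋃ i ∈ s, A i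
  set T := ∑ i ∈ s, ∑ j ∈ s, μ (A i ∩ A j)
  let f : Ω → ℝ≥0∞ := fun x => ∑ i ∈ s, (A i).indicator 1 x
  have hf : Measurable f := Finset.measurable_sum _ fun i hi => measurable_one.indicator (hA i hi)
  have hf_int : ∫⁻ x, f x ∂μ = ∑ i ∈ s, μ (A i) := by
    rw [lintegral_finsetSum _ fun i hi => measurable_one.indicator (hA i hi)]
    exact Finset.sum_congr rfl fun i hi => lintegral_indicator_one (hA i hi)
  have hf_sq : ∫⁻ x, f x ^ (2 : ℝ) ∂μ = T := by
    have hsq : ∀ x, f x ^ (2 : ℝ) = ∑ i ∈ s, ∑ j ∈ s, (A i ∩ A j).indicator 1 x := by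
      intro x
      simp only [f, ENNReal.rpow_two, sq, Finset.sum_mul_sum, Set.inter_indicator_one,
        Pi.mul_apply]
    simp_rw [hsq]
    rw [lintegral_finsetSum _ fun i hi => Finset.measurable_sum _ fun j hj =>
      measurable_one.indicator ((hA i hi).inter (hA j hj))]
    refine Finset.sum_congr rfl fun i hi => ?_
    rw [lintegral_finsetSum _ fun j hj => measurable_one.indicator ((hA i hi).inter (hA j hj))]
    exact Finset.sum_congr rfl fun j hj => lintegral_indicator_one ((hA i hi).inter (hA j hj))
  have hU : MeasurableSet U := s.measurableSet_biUnion hA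
  have hUf : U.indicator 1 * f = f := by
    ext x
    by_cases hx : x ∈ U
    · simp [hx]
    · have : ∀ i ∈ s, x ∉ A i := fun i hi hxi => hx (Set.mem_biUnion hi hxi)
      simp [hx, f, Finset.sum_eq_zero fun i hi => Set.indicator_of_notMem (this i hi) _]
  have hU_sq : ∫⁻ x, U.indicator 1 x ^ (2 : ℝ) ∂μ = μ U := by
    simp_rw [ENNReal.rpow_two, sq, ← Set.inter_indicator_mul, Set.inter_self, Pi.one_apply, one_mul]
    exact lintegral_indicator_one hU
  have holder := ENNReal.lintegral_mul_le_Lp_mul_Lq μ Real.HolderConjugate.two_two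
    (measurable_one.indicator hU).aemeasurable hf.aemeasurable
  rw [hUf, hU_sq, hf_int, hf_sq] at holder
  calc (∑ i ∈ s, μ (A i)) ^ 2 ≤ (μ U ^ (1 / 2 : ℝ) * T ^ (1 / 2 : ℝ)) ^ 2 := by gcongr
    _ = μ U * T := by
      rw [mul_pow, ← ENNReal.rpow_two, ← ENNReal.rpow_two, ← ENNReal.rpow_mul, ← ENNReal.rpow_mul]
      norm_num

variable [IsFiniteMeasure μ]

theorem card_mul_le_measureReal_biUnion {s : Finset ι} {E : ι → Set Ω} {a : ℝ}
    (hd : (s : Set ι).PairwiseDisjoint E) (hm : ∀ i ∈ s, MeasurableSet (E i))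
    (ha : ∀ i ∈ s, a ≤ μ.real (E i)) : s.card * a ≤ μ.real (⋃ i ∈ s, E i) := by
  rw [measureReal_biUnion_finset hd hm]
  simpa using Finset.card_nsmul_le_sum s _ a ha

theorem card_mul_le_card_mul_of_pairwiseDisjoint {s t : Finset ι} {E F : ι → Set Ω} {a b : ℝ}
    (hd : (s : Set ι).PairwiseDisjoint E) (hm : ∀ i ∈ s, MeasurableSet (E i))
    (hEF : ∀ i ∈ s, E i ⊆ ⋃ j ∈ t, F j) (ha : ∀ i ∈ s, a ≤ μ.real (E i))
    (hb : ∀ j ∈ t, μ.real (F j) ≤ b) : s.card * a ≤ t.card * b :=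
  calc s.card * a ≤ μ.real (⋃ i ∈ s, E i) := card_mul_le_measureReal_biUnion hd hm ha
    _ ≤ μ.real (⋃ j ∈ t, F j) := measureReal_mono (Set.iUnion₂_subset hEF) (measure_ne_top _ _)
    _ ≤ t.card * b := measureReal_biUnion_le_card_mul hb

theorem one_le_mul_measureReal_biUnion_of_quasi_indep {s : Finset ι} {A : ι → Set Ω}
    (hA : ∀ i ∈ s, MeasurableSet (A i)) {C : ℝ} (hC : 0 ≤ C)
    (hq : ∀ i ∈ s, ∀ j ∈ s, i ≠ j → μ.real (A i ∩ A j) ≤ C * μ.real (A i) * μ.real (A j))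
    (hs : 1 ≤ ∑ i ∈ s, μ.real (A i)) :
    1 ≤ (1 + C) * μ.real (⋃ i ∈ s, A i) := by
  classical
  have hCS : (∑ i ∈ s, μ.real (A i)) ^ 2 ≤
      μ.real (⋃ i ∈ s, A i) * ∑ i ∈ s, ∑ j ∈ s, μ.real (A i ∩ A j) := by
    have := ENNReal.toReal_mono (ENNReal.mul_ne_top (measure_ne_top _ _) (by simp))
      (sq_sum_measure_le_measure_biUnion_mul_sum_measure_inter (μ := μ) s hA)
    simpa [ENNReal.toReal_sum, measureReal_def] using this
  set S := ∑ i ∈ s, μ.real (A i)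
  set U := ⋃ i ∈ s, A i
  have hrow : ∀ i ∈ s, ∑ j ∈ s, μ.real (A i ∩ A j) ≤ μ.real (A i) + C * μ.real (A i) * S := by
    intro i hi
    rw [← Finset.add_sum_erase s _ hi, Set.inter_self]
    gcongr
    calc ∑ j ∈ s.erase i, μ.real (A i ∩ A j)
        ≤ ∑ j ∈ s.erase i, C * μ.real (A i) * μ.real (A j) := Finset.sum_le_sum fun j hj =>
          hq i hi j (Finset.mem_of_mem_erase hj) (Finset.ne_of_mem_erase hj).symm
      _ ≤ ∑ j ∈ s, C * μ.real (A i) * μ.real (A j) :=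
          Finset.sum_le_sum_of_subset_of_nonneg (Finset.erase_subset i s) fun _ _ _ => by positivity
      _ = C * μ.real (A i) * S := by rw [Finset.mul_sum]
  have hT : ∑ i ∈ s, ∑ j ∈ s, μ.real (A i ∩ A j) ≤ S + C * S ^ 2 := by
    calc _ ≤ ∑ i ∈ s, (μ.real (A i) + C * μ.real (A i) * S) := Finset.sum_le_sum hrow
      _ = S + C * S ^ 2 := by rw [Finset.sum_add_distrib, ← Finset.sum_mul, ← Finset.mul_sum]; ring
  have hU : 0 ≤ μ.real U := measureReal_nonneg
  refine le_of_mul_le_mul_left ?_ (by positivity : 0 < S ^ 2)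
  calc S ^ 2 * 1 ≤ μ.real U * (S + C * S ^ 2) := by linarith [mul_le_mul_of_nonneg_left hT hU]
    _ ≤ μ.real U * (S ^ 2 + C * S ^ 2) := by gcongr; nlinarith
    _ = S ^ 2 * ((1 + C) * μ.real U) := by ring

theorem measure_limsup_atTop_pos_of_quasi_indep {A : ℕ → Set Ω} (hA : ∀ n, MeasurableSet (A n))
    {C : ℝ} (hC : 0 ≤ C)
    (hq : ∀ m n, m < n → μ.real (A m ∩ A n) ≤ C * μ.real (A m) * μ.real (A n))
    (hdiv : ¬ Summable fun n => μ.real (A n)) :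
    0 < μ (limsup A atTop) := by
  have hq' : ∀ m n, m ≠ n → μ.real (A m ∩ A n) ≤ C * μ.real (A m) * μ.real (A n) := by
    intro m n hmn
    rcases hmn.lt_or_gt with h | h
    · exact hq m n h
    · rw [Set.inter_comm]
      linarith [hq n m h]
  have htail : ∀ k, (1 + C)⁻¹ ≤ μ.real (⋃ n, A (n + k)) := by
    intro k
    have hdiv_k : ¬ Summable fun n => μ.real (A (n + k)) :=
      (summable_nat_add_iff (f := fun n => μ.real (A n)) k).not.2 hdiv
    obtain ⟨N, hN⟩ := (((not_summable_iff_tendsto_nat_atTop_of_nonneg fun n => measureReal_nonneg).1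
      hdiv_k).eventually_ge_atTop 1).exists
    have := one_le_mul_measureReal_biUnion_of_quasi_indep (s := Finset.range N)
      (A := fun n => A (n + k)) (fun n _ => hA (n + k)) hC
      (fun i _ j _ hij => hq' (i + k) (j + k) (by omega)) hN
    rw [inv_le_iff_one_le_mul₀' (by positivity)]
    exact this.trans (mul_le_mul_of_nonneg_left
      (measureReal_mono (Set.iUnion₂_subset_iUnion _ _) (measure_ne_top _ _)) (by positivity))
  have hanti : Antitone fun k => ⋃ n, A (n + k) :=
    antitone_nat_of_succ_le fun k => Set.iUnion_subset fun n =>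
      Set.subset_iUnion_of_subset (n + 1) (congrArg A (by omega)).le
  rw [limsup_eq_iInf_iSup_of_nat', Set.iInf_eq_iInter]
  simp only [Set.iSup_eq_iUnion]
  calc 0 < ENNReal.ofReal (1 + C)⁻¹ := ENNReal.ofReal_pos.2 (by positivity)
    _ ≤ ⨅ k, μ (⋃ n, A (n + k)) := le_iInf fun k => ENNReal.ofReal_le_of_le_toReal (htail k)
    _ = μ (⋂ k, ⋃ n, A (n + k)) := (hanti.measure_iInter
      (fun k => (MeasurableSet.iUnion fun n => hA _).nullMeasurableSet)
      ⟨0, measure_ne_top _ _⟩).symm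

end QuasiIndependence

section GeometricSetting

variable {Z I : Type*} {nidx : I → ℕ} {L : ℕ → Finset I} {B : I → ℝ → Set Z}
  {f1 f2 f3 f4 : ℕ → ℝ} {f5 : ℝ → ℝ} {c K : ℝ}
  (hL : ∀ n, ∀ i ∈ L n, nidx i = n)
  (hBmono : ∀ i : I, ∀ ε ε' : ℝ, 0 < ε → ε ≤ ε' → B i ε ⊆ B i ε')
  (hf1 : ∀ n, 0 < f1 n) (hf2 : ∀ n, 0 < f2 n) (hf3 : ∀ n, 0 < f3 n)
  (hf4 : ∀ n, 0 < f4 n) (hf5 : ∀ ε : ℝ, 0 < ε → 0 < f5 ε)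
  (hc : 1 ≤ c) (hK0 : 0 ≤ K)
  (hK : ∀ ε ε' : ℝ, 0 < ε → 0 < ε' → ε' ≤ c * ε → f5 ε' ≤ K * f5 ε)
  (h1 : ∀ n, f3 n ≤ f2 n)
  (h2 : ∀ n, 1 / f5 (f2 n) ≤ f4 n * f1 n)
  (h4 : ∀ n : ℕ, (1 / c) * f1 n ≤ ((L n).card : ℝ) ∧ ((L n).card : ℝ) ≤ c * f1 n)
  (h6 : ∀ n : ℕ, ∀ i j : I, nidx i = n → nidx j = n → i ≠ j →
    Disjoint (B i (f2 n)) (B j (f2 n)))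
  (h7 : ∀ i j : I, nidx i < nidx j →
    (B j (f3 (nidx j)) ∩ B i (f3 (nidx i))).Nonempty →
    B j (f2 (nidx j)) ⊆ B i (c * f3 (nidx i)))

local notation:max "𝒜" n:max => ⋃ i ∈ L n, B i (f3 n)

include hL in
theorem limsup_level_subset :
    limsup (fun n => 𝒜 n) atTop ⊆ {z | {i | z ∈ B i (f3 (nidx i))}.Infinite} := by
  intro z hz
  rw [mem_limsup_iff_frequently_mem, Nat.frequently_atTop_iff_infinite] at hz
  refine Set.Infinite.of_image nidx (hz.mono ?_)
  intro n hn
  obtain ⟨i, hi, hzi⟩ := Set.mem_iUnion₂.1 hn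
  obtain rfl := hL n i hi
  exact ⟨i, hzi, rfl⟩

include hL hBmono h6 in
theorem pairwiseDisjoint_ball_level {n : ℕ} {r : ℝ} (hr : 0 < r) (hrn : r ≤ f2 n) :
    (L n : Set I).PairwiseDisjoint fun i => B i r :=
  fun i hi j hj hij => (h6 n i j (hL n i hi) (hL n j hj) hij).mono
    (hBmono i r _ hr hrn) (hBmono j r _ hr hrn)

variable [MeasurableSpace Z] {μ : Measure Z} [IsFiniteMeasure μ]
  (hBmeas : ∀ i : I, ∀ ε : ℝ, 0 < ε → MeasurableSet (B i ε))
  (h5 : ∀ i : I, ∀ ε : ℝ, 0 < ε → ε ≤ f2 (nidx i) →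
    ENNReal.ofReal ((1 / c) * f4 (nidx i) * f5 ε) ≤ μ (B i ε) ∧
    μ (B i ε) ≤ ENNReal.ofReal (c * f4 (nidx i) * f5 ε))

include hL hf4 hf5 hc h5 in
theorem measureReal_ball_bounds {n : ℕ} {i : I} (hi : i ∈ L n) {ε : ℝ} (hε : 0 < ε)
    (hεn : ε ≤ f2 n) :
    1 / c * f4 n * f5 ε ≤ μ.real (B i ε) ∧ μ.real (B i ε) ≤ c * f4 n * f5 ε := by
  obtain rfl := hL n i hi
  obtain ⟨hlow, hup⟩ := h5 i ε hε hεn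
  have := hf4 (nidx i)
  have := hf5 ε hε
  have : 0 < c := by linarith
  exact ⟨(ENNReal.ofReal_le_iff_le_toReal (measure_ne_top _ _)).1 hlow,
    ENNReal.toReal_le_of_le_ofReal (by positivity) hup⟩

include hL hBmono hf3 hf4 hf5 hc h1 h4 h6 hBmeas h5 in
theorem mul_le_sq_mul_measureReal_level (n : ℕ) :
    f1 n * f4 n * f5 (f3 n) ≤ c ^ 2 * μ.real (𝒜 n) := by
  have : 0 < c := by linarith
  have := hf4 n
  have := hf5 _ (hf3 n)
  have hunion := card_mul_le_measureReal_biUnion (μ := μ)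
    (pairwiseDisjoint_ball_level hL hBmono h6 (hf3 n) (h1 n)) (fun i _ => hBmeas i _ (hf3 n))
    fun i hi => (measureReal_ball_bounds hL hf4 hf5 hc h5 hi (hf3 n) (h1 n)).1
  calc f1 n * f4 n * f5 (f3 n) = c ^ 2 * (1 / c * f1 n * (1 / c * f4 n * f5 (f3 n))) := by
        field_simp
    _ ≤ c ^ 2 * ((L n).card * (1 / c * f4 n * f5 (f3 n))) := by gcongr; exact (h4 n).1
    _ ≤ c ^ 2 * μ.real (𝒜 n) := by gcongr

include hL hBmono hf1 hf2 hf3 hf4 hf5 hc hK h4 h6 h7 hBmeas h5 in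
theorem card_mul_le_of_forall_inter_nonempty {m n : ℕ} (hmn : m < n) (hm : c * f3 m ≤ f2 m)
    {J : Finset I} (hJ : J ⊆ L n) (hmeet : ∀ j ∈ J, (B j (f3 n) ∩ 𝒜 m).Nonempty) :
    J.card * (1 / c * f4 n * f5 (f2 n)) ≤ c ^ 2 * K * (f1 m * f4 m * f5 (f3 m)) := by
  have : 0 < c := by linarith
  have hcf3 : 0 < c * f3 m := by have := hf3 m; positivity
  have hnest : ∀ j ∈ J, B j (f2 n) ⊆ ⋃ i ∈ L m, B i (c * f3 m) := by
    intro j hj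
    obtain ⟨z, hzj, hzm⟩ := hmeet j hj
    obtain ⟨i, hi, hzi⟩ := Set.mem_iUnion₂.1 hzm
    obtain rfl := hL m i hi
    obtain rfl := hL n j (hJ hj)
    exact fun x hx => Set.mem_iUnion₂.2 ⟨i, hi, h7 i j hmn ⟨z, hzj, hzi⟩ hx⟩
  have := hf1 m
  have := hf4 m
  have := hf5 _ hcf3
  calc J.card * (1 / c * f4 n * f5 (f2 n)) ≤ (L m).card * (c * f4 m * f5 (c * f3 m)) :=
        card_mul_le_card_mul_of_pairwiseDisjoint
          ((pairwiseDisjoint_ball_level hL hBmono h6 (hf2 n) le_rfl).subset hJ)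
          (fun j _ => hBmeas j _ (hf2 n)) hnest
          (fun j hj => (measureReal_ball_bounds hL hf4 hf5 hc h5 (hJ hj) (hf2 n) le_rfl).1)
          (fun i hi => (measureReal_ball_bounds hL hf4 hf5 hc h5 hi hcf3 hm).2)
    _ ≤ (c * f1 m) * (c * f4 m * (K * f5 (f3 m))) := by
        gcongr
        exacts [(h4 m).2, hK _ _ (hf3 m) hcf3 le_rfl]
    _ = c ^ 2 * K * (f1 m * f4 m * f5 (f3 m)) := by ring

include hL hBmono hf1 hf2 hf3 hf4 hf5 hc hK h1 h2 h4 h6 h7 hBmeas h5 in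
theorem measureReal_inter_level_le_of_nested {m n : ℕ} (hmn : m < n) (hm : c * f3 m ≤ f2 m) :
    μ.real (𝒜 m ∩ 𝒜 n) ≤
      c ^ 4 * K * (f1 m * f4 m * f5 (f3 m)) * (f1 n * f4 n * f5 (f3 n)) := by
  classical
  set J := (L n).filter fun j => (B j (f3 n) ∩ 𝒜 m).Nonempty
  have hcover : 𝒜 m ∩ 𝒜 n ⊆ ⋃ j ∈ J, B j (f3 n) := by
    rintro z ⟨hzm, hzn⟩
    obtain ⟨j, hj, hzj⟩ := Set.mem_iUnion₂.1 hzn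
    exact Set.mem_biUnion (Finset.mem_filter.2 ⟨hj, z, hzj, hzm⟩) hzj
  have hcount := card_mul_le_of_forall_inter_nonempty hL hBmono hf1 hf2 hf3 hf4 hf5 hc hK h4 h6
    h7 hBmeas h5 hmn hm (Finset.filter_subset _ _) fun j hj => (Finset.mem_filter.1 hj).2
  have h2n : 1 ≤ f4 n * f1 n * f5 (f2 n) := (div_le_iff₀ (hf5 _ (hf2 n))).1 (h2 n)
  have : 0 < c := by linarith
  have := hf1 n
  have := hf4 n
  have := hf5 _ (hf3 n)
  calc μ.real (𝒜 m ∩ 𝒜 n) ≤ J.card * (c * f4 n * f5 (f3 n)) :=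
        (measureReal_mono hcover (measure_ne_top _ _)).trans
          (measureReal_biUnion_le_card_mul fun j hj => (measureReal_ball_bounds hL hf4 hf5 hc h5
            (Finset.mem_filter.1 hj).1 (hf3 n) (h1 n)).2)
    -- (2) pays for the radius `f2 n` in `hcount` with the `n`-th term of the series
    _ ≤ J.card * (c * f4 n * f5 (f3 n)) * (f4 n * f1 n * f5 (f2 n)) :=
        le_mul_of_one_le_right (by positivity) h2n
    _ = c ^ 2 * (J.card * (1 / c * f4 n * f5 (f2 n))) * (f1 n * f4 n * f5 (f3 n)) := by
        field_simp
    _ ≤ c ^ 2 * (c ^ 2 * K * (f1 m * f4 m * f5 (f3 m))) * (f1 n * f4 n * f5 (f3 n)) := by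
        gcongr
    _ = c ^ 4 * K * (f1 m * f4 m * f5 (f3 m)) * (f1 n * f4 n * f5 (f3 n)) := by ring

include hL hBmono hf1 hf2 hf3 hf4 hf5 hc hK0 hK h1 h2 h4 h6 h7 hBmeas h5 in
theorem measureReal_inter_level_le {m n : ℕ} (hmn : m < n) :
    μ.real (𝒜 m ∩ 𝒜 n) ≤ c ^ 8 * K * μ.real (𝒜 m) * μ.real (𝒜 n) := by
  have hlow := mul_le_sq_mul_measureReal_level hL hBmono hf3 hf4 hf5 hc h1 h4 h6 hBmeas h5
  have : 0 < c := by linarith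
  rcases le_or_gt (c * f3 m) (f2 m) with hm | hm
  · calc μ.real (𝒜 m ∩ 𝒜 n)
        ≤ c ^ 4 * K * (f1 m * f4 m * f5 (f3 m)) * (f1 n * f4 n * f5 (f3 n)) :=
          measureReal_inter_level_le_of_nested hL hBmono hf1 hf2 hf3 hf4 hf5 hc hK h1 h2 h4 h6 h7
            hBmeas h5 hmn hm
      _ ≤ c ^ 4 * K * (c ^ 2 * μ.real (𝒜 m)) * (c ^ 2 * μ.real (𝒜 n)) := by
          have := hf1 n
          have := hf4 n
          have := hf5 _ (hf3 n)
          gcongr c ^ 4 * K * ?_ * ?_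
          exacts [hlow m, hlow n]
      _ = c ^ 8 * K * μ.real (𝒜 m) * μ.real (𝒜 n) := by ring
  · -- (5) says nothing at radius `c * f3 m > f2 m`; instead doubling bounds `μ (𝒜 m)` below
    have h1m : 1 ≤ c ^ 2 * K * μ.real (𝒜 m) := by
      have := hf1 m
      have := hf4 m
      calc 1 ≤ f4 m * f1 m * f5 (f2 m) := (div_le_iff₀ (hf5 _ (hf2 m))).1 (h2 m)
        _ ≤ f4 m * f1 m * (K * f5 (f3 m)) := by gcongr; exact hK _ _ (hf3 m) (hf2 m) hm.le
        _ = K * (f1 m * f4 m * f5 (f3 m)) := by ring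
        _ ≤ K * (c ^ 2 * μ.real (𝒜 m)) := by gcongr K * ?_; exact hlow m
        _ = c ^ 2 * K * μ.real (𝒜 m) := by ring
    calc μ.real (𝒜 m ∩ 𝒜 n) ≤ μ.real (𝒜 n) :=
          measureReal_mono Set.inter_subset_right (measure_ne_top _ _)
      _ ≤ c ^ 2 * K * μ.real (𝒜 m) * μ.real (𝒜 n) := le_mul_of_one_le_left measureReal_nonneg h1m
      _ ≤ c ^ 8 * K * μ.real (𝒜 m) * μ.real (𝒜 n) := by
          gcongr ?_ * K * _ * _
          exact pow_le_pow_right₀ hc (by norm_num)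

end GeometricSetting

/-- Divergence part of the geometric Borel–Cantelli lemma. With the notation of the
convergence part, assume there is `c ≥ 1` such that (1) `f₃ ≤ f₂`;
(2) `1/(f₅ ∘ f₂) ≤ f₄·f₁`; (3) there are `c', c'' > 1` with `f₅ ε' ≤ c''·f₅ ε` whenever
`ε' ≤ c'·ε`; (4) `(1/c)·f₁ n ≤ Card I_n ≤ c·f₁ n`; (5) for `0 < ε ≤ f₂ (nidx i)`,
`(1/c)·f₄(nidx i)·f₅ ε ≤ μ (B i ε) ≤ c·f₄(nidx i)·f₅ ε`; (6) for each `n` the sets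
`B i (f₂ n)`, `i ∈ I_n`, are pairwise disjoint; (7) for `nidx i < nidx j`, if
`B j (f₃ (nidx j))` meets `B i (f₃ (nidx i))` then `B j (f₂ (nidx j)) ⊆ B i (c·f₃ (nidx i))`.
If `∑ f₁ n · f₄ n · f₅ (f₃ n)` diverges, then the set of points belonging to
`B i (f₃ (nidx i))` for infinitely many `i` has positive measure. -/
theorem geometric_borel_cantelli_divergence
    {Z : Type*} [MeasurableSpace Z] (μ : Measure Z) (hfin : μ Set.univ ≠ ⊤)
    {I : Type*} (nidx : I → ℕ) (hfib : ∀ n : ℕ, {i : I | nidx i = n}.Finite)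
    (B : I → ℝ → Set Z)
    (hBmeas : ∀ i : I, ∀ ε : ℝ, 0 < ε → MeasurableSet (B i ε))
    (hBmono : ∀ i : I, ∀ ε ε' : ℝ, 0 < ε → ε ≤ ε' → B i ε ⊆ B i ε')
    (f1 f2 f3 f4 : ℕ → ℝ) (f5 : ℝ → ℝ)
    (hf1 : ∀ n, 0 < f1 n) (hf2 : ∀ n, 0 < f2 n) (hf3 : ∀ n, 0 < f3 n)
    (hf4 : ∀ n, 0 < f4 n) (hf5 : ∀ ε : ℝ, 0 < ε → 0 < f5 ε)
    (c : ℝ) (hc : 1 ≤ c)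
    (h1 : ∀ n, f3 n ≤ f2 n)
    (h2 : ∀ n, 1 / f5 (f2 n) ≤ f4 n * f1 n)
    (h3 : ∃ c' c'' : ℝ, 1 < c' ∧ 1 < c'' ∧
      ∀ ε ε' : ℝ, 0 < ε → 0 < ε' → ε' ≤ c' * ε → f5 ε' ≤ c'' * f5 ε)
    (h4 : ∀ n : ℕ, (1 / c) * f1 n ≤ ((hfib n).toFinset.card : ℝ) ∧
      ((hfib n).toFinset.card : ℝ) ≤ c * f1 n)
    (h5 : ∀ i : I, ∀ ε : ℝ, 0 < ε → ε ≤ f2 (nidx i) →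
      ENNReal.ofReal ((1 / c) * f4 (nidx i) * f5 ε) ≤ μ (B i ε) ∧
      μ (B i ε) ≤ ENNReal.ofReal (c * f4 (nidx i) * f5 ε))
    (h6 : ∀ n : ℕ, ∀ i j : I, nidx i = n → nidx j = n → i ≠ j →
      Disjoint (B i (f2 n)) (B j (f2 n)))
    (h7 : ∀ i j : I, nidx i < nidx j →
      (B j (f3 (nidx j)) ∩ B i (f3 (nidx i))).Nonempty →
      B j (f2 (nidx j)) ⊆ B i (c * f3 (nidx i)))
    (hdiv : ¬ Summable (fun n : ℕ => f1 n * f4 n * f5 (f3 n))) :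
    0 < μ {z : Z | {i : I | z ∈ B i (f3 (nidx i))}.Infinite} := by
  have : IsFiniteMeasure μ := ⟨hfin.lt_top⟩
  obtain ⟨c', c'', hc', hc'', h3⟩ := h3
  obtain ⟨K, hK0, hK⟩ := exists_le_mul_of_doubling hc' (by linarith) h3 c
  set L : ℕ → Finset I := fun n => (hfib n).toFinset
  have hL : ∀ n, ∀ i ∈ L n, nidx i = n := fun n i => (hfib n).mem_toFinset.1
  have hlow := mul_le_sq_mul_measureReal_level hL hBmono hf3 hf4 hf5 hc h1 h4 h6 hBmeas h5
  have hdiv' : ¬ Summable fun n => μ.real (⋃ i ∈ L n, B i (f3 n)) := fun hs =>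
    hdiv <| (hs.mul_left (c ^ 2)).of_nonneg_of_le
      (fun n => by have := hf1 n; have := hf4 n; have := hf5 _ (hf3 n); positivity) hlow
  have hq := fun m n (hmn : m < n) => measureReal_inter_level_le hL hBmono hf1 hf2 hf3 hf4
    hf5 hc hK0 hK h1 h2 h4 h6 h7 hBmeas h5 hmn
  exact (measure_limsup_atTop_pos_of_quasi_indep
    (fun n => (L n).measurableSet_biUnion fun i _ => hBmeas i _ (hf3 n)) (by positivity) hq
    hdiv').trans_le (measure_mono (limsup_level_subset hL))
end

section
/- Let ψ : [0,∞) → (0,∞) be measurable, and suppose there exist constants B > 0 and A ≥ 1 such that for all x, y ∈ [0,∞) with |x−y| ≤ B one has ψ(y) ≤ A·ψ(x) (ψ is slowly varying). Then for every positive integer N and every ε > 0, the series ∑_{n=0}^∞ ψ(Nn)^ε converges if and only if the integral ∫_0^∞ ψ(t)^ε dt converges. -/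
/-!
Chaining the defining inequality along `⌈N / B⌉` steps of length at most `B` shows that
`ψ ^ ε` varies by at most a fixed factor `C` on any interval of length `N` in `[0, ∞)`.
Splitting `[0, ∞)` into the intervals `[N n, N (n + 1))`, the integral over each piece is then
within the factor `C` of `N · ψ (N n) ^ ε`, so the series and the integral are finite together.
-/

open MeasureTheory Set
open scoped ENNReal

theorem le_pow_mul_of_abs_sub_le_mul {ψ : ℝ → ℝ} {s : Set ℝ} {A B : ℝ} (hs : Convex ℝ s)
    (hA : 0 ≤ A) (hψ : ∀ x ∈ s, ∀ y ∈ s, |x - y| ≤ B → ψ y ≤ A * ψ x) (k : ℕ) :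
    ∀ x ∈ s, ∀ y ∈ s, |x - y| ≤ k * B → ψ y ≤ A ^ k * ψ x := by
  induction k with
  | zero =>
    intro x _ y _ hxy
    rw [abs_sub_comm, Nat.cast_zero, zero_mul, abs_nonpos_iff, sub_eq_zero] at hxy
    simp [hxy]
  | succ k ih =>
    intro x hx y hy hxy
    have hk : (0 : ℝ) < k + 1 := by positivity
    -- one step of length `|x - y| / (k + 1) ≤ B` from `x` towards `y`, then `k` more
    set z := x + (k + 1 : ℝ)⁻¹ * (y - x)
    have hz : z ∈ s := hs.add_smul_sub_mem hx hy ⟨by positivity, inv_le_one_of_one_le₀ (by simp)⟩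
    have hxz : |x - z| ≤ B := by
      rw [show x - z = (k + 1 : ℝ)⁻¹ * (x - y) by ring, abs_mul, abs_of_pos (inv_pos.2 hk),
        inv_mul_le_iff₀ hk]
      push_cast at hxy
      linarith
    have hzy : |z - y| ≤ k * B := by
      rw [show z - y = k / (k + 1) * (x - y) by simp only [z]; field_simp; ring, abs_mul,
        abs_of_nonneg (by positivity), div_mul_eq_mul_div, div_le_iff₀ hk]
      push_cast at hxy
      nlinarith [Nat.cast_nonneg (α := ℝ) k]
    calc ψ y ≤ A ^ k * ψ z := ih z hz y hy hzy
      _ ≤ A ^ k * (A * ψ x) := by gcongr; exact hψ x hx z hz hxz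
      _ = A ^ (k + 1) * ψ x := by ring

theorem exists_le_mul_of_abs_sub_le {ψ : ℝ → ℝ} {s : Set ℝ} {A B : ℝ} (hs : Convex ℝ s)
    (hA : 0 ≤ A) (hB : 0 < B) (hψ : ∀ x ∈ s, ∀ y ∈ s, |x - y| ≤ B → ψ y ≤ A * ψ x) (L : ℝ) :
    ∃ C, 0 ≤ C ∧ ∀ x ∈ s, ∀ y ∈ s, |x - y| ≤ L → ψ y ≤ C * ψ x := by
  refine ⟨A ^ ⌈L / B⌉₊, by positivity, fun x hx y hy hxy ↦
    le_pow_mul_of_abs_sub_le_mul hs hA hψ _ x hx y hy (hxy.trans ?_)⟩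
  rw [← div_le_iff₀ hB]
  exact Nat.le_ceil _

theorem iUnion_Ico_mul_natCast {h : ℝ} (hh : 0 < h) :
    ⋃ n : ℕ, Ico (h * n) (h * (n + 1)) = Ici 0 := by
  have := iUnion_Ico_map_succ_eq_Ici (f := fun n : ℕ ↦ h * n) (fun n ↦ by simp; positivity)
    (not_bddAbove_iff.2 fun x ↦ ?_)
  · simpa [Order.succ_eq_add_one] using this
  obtain ⟨n, hn⟩ := exists_nat_gt (x / h)
  exact ⟨h * n, mem_range_self n, by rwa [div_lt_iff₀ hh, mul_comm] at hn⟩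

section Comparison

variable {F : ℝ → ℝ≥0∞} {h : ℝ} {C : ℝ≥0∞}

theorem lintegral_Ici_zero_eq_tsum_lintegral_Ico (hh : 0 < h) :
    ∫⁻ t in Ici 0, F t = ∑' n : ℕ, ∫⁻ t in Ico (h * n) (h * (n + 1)), F t := by
  have hmono : Monotone (fun n : ℕ ↦ h * n) := fun _ _ hmn ↦
    mul_le_mul_of_nonneg_left (Nat.cast_le.2 hmn) hh.le
  rw [← iUnion_Ico_mul_natCast hh, lintegral_iUnion (fun _ ↦ measurableSet_Ico)]
  simpa [Order.succ_eq_add_one] using hmono.pairwise_disjoint_on_Ico_succ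

theorem abs_sub_le_of_mem_Ico_mul_natCast (hh : 0 < h) {n : ℕ} {t : ℝ}
    (ht : t ∈ Ico (h * n) (h * (n + 1))) : 0 ≤ h * n ∧ 0 ≤ t ∧ |h * n - t| ≤ h := by
  have : 0 ≤ h * n := by positivity
  refine ⟨this, this.trans ht.1, ?_⟩
  rw [abs_sub_comm, abs_of_nonneg (sub_nonneg.2 ht.1)]
  linarith [ht.2]

theorem lintegral_Ici_zero_le_tsum (hh : 0 < h)
    (hF : ∀ x y, 0 ≤ x → 0 ≤ y → |x - y| ≤ h → F y ≤ C * F x) :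
    ∫⁻ t in Ici 0, F t ≤ ENNReal.ofReal h * C * ∑' n : ℕ, F (h * n) := by
  rw [lintegral_Ici_zero_eq_tsum_lintegral_Ico hh, ← ENNReal.tsum_mul_left]
  refine ENNReal.tsum_le_tsum fun n ↦ ?_
  calc ∫⁻ t in Ico (h * n) (h * (n + 1)), F t
      ≤ ∫⁻ _ in Ico (h * n) (h * (n + 1)), C * F (h * n) :=
        setLIntegral_mono' measurableSet_Ico fun t ht ↦
          let ⟨hn, ht, hnt⟩ := abs_sub_le_of_mem_Ico_mul_natCast hh ht
          hF _ _ hn ht hnt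
    _ = ENNReal.ofReal h * C * F (h * n) := by
        rw [setLIntegral_const, Real.volume_Ico, mul_comm, mul_assoc]
        congr 2
        ring

theorem tsum_le_lintegral_Ici_zero (hh : 0 < h) (hC : C ≠ ⊤)
    (hF : ∀ x y, 0 ≤ x → 0 ≤ y → |x - y| ≤ h → F y ≤ C * F x) :
    ENNReal.ofReal h * ∑' n : ℕ, F (h * n) ≤ C * ∫⁻ t in Ici 0, F t := by
  rw [lintegral_Ici_zero_eq_tsum_lintegral_Ico hh, ← ENNReal.tsum_mul_left,
    ← ENNReal.tsum_mul_left]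
  refine ENNReal.tsum_le_tsum fun n ↦ ?_
  calc ENNReal.ofReal h * F (h * n) = ∫⁻ _ in Ico (h * n) (h * (n + 1)), F (h * n) := by
        rw [setLIntegral_const, Real.volume_Ico, mul_comm]
        congr 2
        ring
    _ ≤ ∫⁻ t in Ico (h * n) (h * (n + 1)), C * F t :=
        setLIntegral_mono' measurableSet_Ico fun t ht ↦
          let ⟨hn, ht, hnt⟩ := abs_sub_le_of_mem_Ico_mul_natCast hh ht
          hF _ _ ht hn (by rwa [abs_sub_comm])
    _ = C * ∫⁻ t in Ico (h * n) (h * (n + 1)), F t := lintegral_const_mul' C F hC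

theorem tsum_ne_top_iff_lintegral_Ici_zero_ne_top (hh : 0 < h) (hC : C ≠ ⊤)
    (hF : ∀ x y, 0 ≤ x → 0 ≤ y → |x - y| ≤ h → F y ≤ C * F x) :
    ∑' n : ℕ, F (h * n) ≠ ⊤ ↔ ∫⁻ t in Ici 0, F t ≠ ⊤ := by
  refine ⟨fun hsum ↦ ne_top_of_le_ne_top ?_ (lintegral_Ici_zero_le_tsum hh hF),
    fun hint ↦ (ENNReal.lt_top_of_mul_ne_top_right (a := ENNReal.ofReal h) ?_ ?_).ne⟩
  · exact ENNReal.mul_ne_top (ENNReal.mul_ne_top ENNReal.ofReal_ne_top hC) hsum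
  · exact ne_top_of_le_ne_top (ENNReal.mul_ne_top hC hint) (tsum_le_lintegral_Ici_zero hh hC hF)
  · exact (ENNReal.ofReal_pos.2 hh).ne'

end Comparison

theorem summable_iff_tsum_ofReal_ne_top {ι : Type*} {f : ι → ℝ} (hf : ∀ i, 0 ≤ f i) :
    Summable f ↔ ∑' i, ENNReal.ofReal (f i) ≠ ⊤ :=
  ⟨Summable.tsum_ofReal_ne_top, fun h ↦
    (ENNReal.summable_toReal h).congr fun i ↦ ENNReal.toReal_ofReal (hf i)⟩

theorem summable_iff_integrableOn_Ici_zero {f : ℝ → ℝ} {h C : ℝ} (hh : 0 < h)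
    (hf_meas : AEStronglyMeasurable f (volume.restrict (Ici 0)))
    (hf_nonneg : ∀ t, 0 ≤ t → 0 ≤ f t)
    (hf : ∀ x y, 0 ≤ x → 0 ≤ y → |x - y| ≤ h → f y ≤ C * f x) :
    Summable (fun n : ℕ ↦ f (h * n)) ↔ IntegrableOn f (Ici 0) := by
  have hF : ∀ x y, 0 ≤ x → 0 ≤ y → |x - y| ≤ h →
      ENNReal.ofReal (f y) ≤ ENNReal.ofReal C * ENNReal.ofReal (f x) := fun x y hx hy hxy ↦ by
    rw [← ENNReal.ofReal_mul' (hf_nonneg x hx)]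
    exact ENNReal.ofReal_le_ofReal (hf x y hx hy hxy)
  rw [summable_iff_tsum_ofReal_ne_top fun n ↦ hf_nonneg _ (by positivity),
    tsum_ne_top_iff_lintegral_Ici_zero_ne_top hh ENNReal.ofReal_ne_top hF, IntegrableOn,
    Integrable,
    hasFiniteIntegral_iff_ofReal (ae_restrict_of_forall_mem measurableSet_Ici hf_nonneg),
    lt_top_iff_ne_top]
  exact (and_iff_right hf_meas).symm

/-- For a slowly varying map `ψ : [0,∞) → (0,∞)` (measurable, with `ψ y ≤ A·ψ x` whenever
`|x−y| ≤ B`, for some `A ≥ 1`, `B > 0`), for every positive integer `N` and every `ε > 0`,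
the series `∑ ψ(Nn)^ε` converges iff the integral `∫_0^∞ ψ(t)^ε dt` converges. -/
theorem summable_iff_integrable_of_slowly_varying
    (ψ : ℝ → ℝ) (hmeas : Measurable ψ) (hpos : ∀ t : ℝ, 0 ≤ t → 0 < ψ t)
    (A B : ℝ) (hA : 1 ≤ A) (hB : 0 < B)
    (hsv : ∀ x y : ℝ, 0 ≤ x → 0 ≤ y → |x - y| ≤ B → ψ y ≤ A * ψ x)
    (N : ℕ) (hN : 0 < N) (ε : ℝ) (hε : 0 < ε) :
    Summable (fun n : ℕ => ψ ((N : ℝ) * n) ^ ε) ↔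
      IntegrableOn (fun t : ℝ => ψ t ^ ε) (Set.Ici (0 : ℝ)) := by
  obtain ⟨C, hC_nonneg, hC⟩ := exists_le_mul_of_abs_sub_le (convex_Ici 0) (zero_le_one.trans hA)
    hB (fun x hx y hy ↦ hsv x y hx hy) N
  refine summable_iff_integrableOn_Ici_zero (C := C ^ ε) (Nat.cast_pos.2 hN)
    (hmeas.pow_const ε).aestronglyMeasurable (fun t ht ↦ Real.rpow_nonneg (hpos t ht).le ε)
    fun x y hx hy hxy ↦ ?_
  calc ψ y ^ ε ≤ (C * ψ x) ^ ε := by gcongr; exacts [(hpos y hy).le, hC x hx y hy hxy]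
    _ = C ^ ε * ψ x ^ ε := Real.mul_rpow hC_nonneg (hpos x hx).le
end

section
/- Let f : ℕ → (0,∞) be non-increasing, and define a sequence (t_n) by t_0 ≥ 1 and t_{n+1} = t_n − log f_*(t_n), where f_* : [0,∞) → (0, 1/e] is non-increasing. Suppose ∫_{t_0}^∞ f_*(t)^δ / (−log f_*(t)) dt diverges for some δ > 0. Then ∑_{n=0}^∞ f_*(t_n)^δ diverges. -/
/-!
Cut `[t 0, ∞)` into the intervals `[t n, t (n + 1))`, of length `-log f(t n) ≥ 1`. The integrand
`f^δ / (-log f)` is a monotone function of `f` on `(0, 1)`, hence antitone in `t`, so its integral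
over `[t n, t (n + 1))` is at most its value at `t n` times the length, which is `f(t n)^δ`.
A convergent series would therefore make the integrand integrable.
-/

open MeasureTheory Set Filter Real

theorem monotoneOn_rpow_div_neg_log {δ : ℝ} (hδ : 0 ≤ δ) :
    MonotoneOn (fun x : ℝ => x ^ δ / -log x) (Ioo 0 1) := fun _ hx _ hy hxy =>
  div_le_div₀ (rpow_nonneg hy.1.le δ) (rpow_le_rpow hx.1.le hxy hδ)
    (neg_pos.2 (log_neg hy.1 hy.2)) (neg_le_neg (log_le_log hx.1 hxy))

theorem add_natCast_le_of_add_one_le {t : ℕ → ℝ}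
    (hstep : ∀ n, t 0 ≤ t n → t n + 1 ≤ t (n + 1)) (n : ℕ) : t 0 + n ≤ t n := by
  induction n with
  | zero => simp
  | succ n ih =>
    push_cast
    linarith [hstep n (by linarith [n.cast_nonneg (α := ℝ)])]

theorem setLIntegral_Ico_le {g : ℝ → ℝ} {a b c : ℝ} (hab : a ≤ b) (hg : ∀ x ∈ Ico a b, g x ≤ c) :
    ∫⁻ x in Ico a b, ENNReal.ofReal (g x) ≤ ENNReal.ofReal (c * (b - a)) :=
  calc ∫⁻ x in Ico a b, ENNReal.ofReal (g x)
      ≤ ∫⁻ _ in Ico a b, ENNReal.ofReal c :=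
        setLIntegral_mono measurable_const fun x hx => ENNReal.ofReal_le_ofReal (hg x hx)
    _ = ENNReal.ofReal (c * (b - a)) := by
        rw [setLIntegral_const, Real.volume_Ico, ENNReal.ofReal_mul' (sub_nonneg.2 hab)]

theorem lintegral_Ici_le_tsum_of_antitoneOn {g : ℝ → ℝ} {t : ℕ → ℝ}
    (hg : AntitoneOn g (Ici (t 0))) (ht : Monotone t) (ht_unbdd : ¬BddAbove (range t)) :
    ∫⁻ x in Ici (t 0), ENNReal.ofReal (g x) ≤
      ∑' n, ENNReal.ofReal (g (t n) * (t (n + 1) - t n)) := by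
  have hcover : ⋃ n, Ico (t n) (t (n + 1)) = Ici (t 0) := by
    simpa using iUnion_Ico_map_succ_eq_Ici (fun n => ht (Nat.zero_le n)) ht_unbdd
  rw [← hcover]
  refine (lintegral_iUnion_le _ _).trans (ENNReal.tsum_le_tsum fun n => ?_)
  have htn : t n ∈ Ici (t 0) := ht (Nat.zero_le n)
  exact setLIntegral_Ico_le (ht n.le_succ) fun x hx => hg htn (le_trans htn hx.1) hx.1

theorem AntitoneOn.integrableOn_Ici_of_summable {g : ℝ → ℝ} {t : ℕ → ℝ}
    (hg : AntitoneOn g (Ici (t 0))) (hg_nonneg : ∀ x ∈ Ici (t 0), 0 ≤ g x) (ht : Monotone t)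
    (ht_unbdd : ¬BddAbove (range t)) (hsum : Summable fun n => g (t n) * (t (n + 1) - t n)) :
    IntegrableOn g (Ici (t 0)) := by
  refine ⟨(aemeasurable_restrict_of_antitoneOn measurableSet_Ici hg).aestronglyMeasurable, ?_⟩
  rw [hasFiniteIntegral_iff_ofReal ((ae_restrict_iff' measurableSet_Ici).2 (ae_of_all _ hg_nonneg))]
  refine (lintegral_Ici_le_tsum_of_antitoneOn hg ht ht_unbdd).trans_lt ?_
  rw [← ENNReal.ofReal_tsum_of_nonneg (fun n => mul_nonneg (hg_nonneg _ (ht (Nat.zero_le n)))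
    (sub_nonneg.2 (ht n.le_succ))) hsum]
  exact ENNReal.ofReal_lt_top

/-- Let `f⋆ : [0,∞) → (0, 1/e]` be non-increasing, `δ > 0`, and `(t n)` defined by `t 0 ≥ 1`
and `t (n+1) = t n − log (f⋆ (t n))`. If `∫_{t 0}^∞ f⋆(t)^δ / (−log f⋆(t)) dt` diverges,
then `∑ f⋆(t n)^δ` diverges. -/
theorem summable_of_integral_divergence
    (f : ℝ → ℝ) (hmono : AntitoneOn f (Set.Ici (0 : ℝ)))
    (hrange : ∀ t : ℝ, 0 ≤ t → 0 < f t ∧ f t ≤ Real.exp (-1))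
    (t : ℕ → ℝ) (ht0 : 1 ≤ t 0)
    (hrec : ∀ n : ℕ, t (n + 1) = t n - Real.log (f (t n)))
    (δ : ℝ) (hδ : 0 < δ)
    (hdiv : ¬ IntegrableOn (fun s : ℝ => f s ^ δ / (-Real.log (f s))) (Set.Ici (t 0))) :
    ¬ Summable (fun n : ℕ => f (t n) ^ δ) := by
  have hf_mem : ∀ s, 0 ≤ s → f s ∈ Ioo 0 1 := fun s hs =>
    ⟨(hrange s hs).1, (hrange s hs).2.trans_lt (exp_lt_one_iff.2 (by norm_num))⟩
  have hlog : ∀ s, 0 ≤ s → 1 ≤ -log (f s) := fun s hs => by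
    linarith [(log_le_iff_le_exp (hrange s hs).1).2 (hrange s hs).2]
  have hgrowth : ∀ n, t 0 + n ≤ t n := add_natCast_le_of_add_one_le fun n hn => by
    rw [hrec]; linarith [hlog (t n) (by linarith)]
  have ht_nonneg : ∀ n, 0 ≤ t n := fun n => by linarith [hgrowth n, n.cast_nonneg (α := ℝ)]
  have ht_mono : Monotone t := monotone_nat_of_le_succ fun n => by
    rw [hrec]; linarith [hlog _ (ht_nonneg n)]
  have ht_unbdd : ¬BddAbove (range t) := not_bddAbove_of_tendsto_atTop <|
    tendsto_atTop_mono hgrowth (tendsto_atTop_add_const_left _ _ tendsto_natCast_atTop_atTop)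
  have hIci : Ici (t 0) ⊆ Ici 0 := Ici_subset_Ici.2 (ht_nonneg 0)
  have hg : AntitoneOn (fun s => f s ^ δ / -log (f s)) (Ici (t 0)) := fun a ha b hb hab =>
    monotoneOn_rpow_div_neg_log hδ.le (hf_mem b (hIci hb)) (hf_mem a (hIci ha))
      (hmono (hIci ha) (hIci hb) hab)
  have hg_nonneg : ∀ s ∈ Ici (t 0), 0 ≤ f s ^ δ / -log (f s) := fun s hs =>
    div_nonneg (rpow_nonneg (hrange s (hIci hs)).1.le δ) (by linarith [hlog s (hIci hs)])
  have hterm : ∀ n, f (t n) ^ δ / -log (f (t n)) * (t (n + 1) - t n) = f (t n) ^ δ := fun n => by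
    rw [hrec, sub_sub_cancel_left, div_mul_cancel₀ _ (by linarith [hlog _ (ht_nonneg n)])]
  intro hsum
  exact hdiv (hg.integrableOn_Ici_of_summable hg_nonneg ht_mono ht_unbdd (by simpa only [hterm]))
end

section
/- In the hyperbolic plane ℍ²_ℝ, let C be a geodesic line and let ξ, η be two distinct points at infinity lying in the same component of ∂_∞ℍ² \ ∂_∞C. Then the distance-like map satisfies d_C(ξ,η) = sinh( d(π_C(ξ), π_C(η)) / 2 ), where π_C denotes the closest-point projection onto C. -/
open Filter UpperHalfPlane

/-- The point `i·ξ` of the hyperbolic plane (upper half-plane model); for a boundary point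
`ξ > 0`, this is the closest point `π_C(ξ)` on the geodesic line `C` given by the imaginary
axis. -/
noncomputable def axisPoint (ξ : ℝ) (hξ : 0 < ξ) : UpperHalfPlane :=
  ⟨⟨0, ξ⟩, hξ⟩

/-- The unit-speed geodesic ray of the hyperbolic plane starting at time `0` from `i·ξ`
(the projection of the boundary point `ξ > 0` on the imaginary axis `C`) and converging to
the boundary point `ξ` on the real line: it travels along the Euclidean semicircle of
radius `ξ` centered at `0`, orthogonal to `C`. -/
noncomputable def axisRay (ξ : ℝ) (hξ : 0 < ξ) (t : ℝ) : UpperHalfPlane :=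
  ⟨⟨ξ * Real.tanh t, ξ / Real.cosh t⟩, by positivity⟩

/-!
At time `t` the rays towards `ξ` and `η` sit at the same Euclidean angle on the semicircles of
radii `ξ` and `η`, so their Euclidean distance is constantly `|ξ - η|` while their heights
shrink like `1 / cosh t`. The distance formula of the upper half-plane then gives
`d(ξ_t, η_t) = 2 arsinh (a cosh t)` with `a = |ξ - η| / (2 √(ξη))`, and `t = 0` shows
`sinh (d(iξ, iη) / 2) = a`. Finally `exp (arsinh (a cosh t) - t) → a`, because
`arsinh y = log (y + √(1 + y²))` and `cosh t · e⁻ᵗ → 1/2`.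
-/

open Real Topology

lemma tendsto_cosh_mul_exp_neg_atTop :
    Tendsto (fun t : ℝ => cosh t * exp (-t)) atTop (𝓝 (1 / 2)) := by
  have h : Tendsto (fun t : ℝ => (1 + exp (-t) ^ 2) / 2) atTop (𝓝 ((1 + 0 ^ 2) / 2)) :=
    ((tendsto_exp_neg_atTop_nhds_zero.pow 2).const_add 1).div_const 2
  have hinv (t : ℝ) : exp t * exp (-t) = 1 := by rw [← exp_add, add_neg_cancel, exp_zero]
  convert h using 2 with t
  · rw [cosh_eq]
    linear_combination hinv t / 2
  · norm_num

lemma exp_arsinh_sub (y t : ℝ) :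
    exp (arsinh y - t) = y * exp (-t) + √(exp (-t) ^ 2 + (y * exp (-t)) ^ 2) := by
  have hsqrt : √(exp (-t) ^ 2 + (y * exp (-t)) ^ 2) = √(1 + y ^ 2) * exp (-t) := by
    rw [show exp (-t) ^ 2 + (y * exp (-t)) ^ 2 = (1 + y ^ 2) * exp (-t) ^ 2 by ring,
      sqrt_mul (by positivity), sqrt_sq (exp_pos _).le]
  rw [hsqrt, sub_eq_add_neg, exp_add, exp_arsinh]
  ring

lemma tendsto_exp_arsinh_mul_cosh_sub_atTop {a : ℝ} (ha : 0 ≤ a) :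
    Tendsto (fun t : ℝ => exp (arsinh (a * cosh t) - t)) atTop (𝓝 a) := by
  have hu := tendsto_cosh_mul_exp_neg_atTop.const_mul a
  have hlim := hu.add (((tendsto_exp_neg_atTop_nhds_zero.pow 2).add (hu.pow 2)).sqrt)
  convert hlim using 2 with t
  · rw [exp_arsinh_sub, mul_assoc]
  · rw [zero_pow two_ne_zero, zero_add, sqrt_sq (by positivity)]
    ring

lemma axisRay_zero (ξ : ℝ) (hξ : 0 < ξ) : axisRay ξ hξ 0 = axisPoint ξ hξ := by
  ext; simp [axisRay, axisPoint]

lemma dist_coe_axisRay (ξ η : ℝ) (hξ : 0 < ξ) (hη : 0 < η) (t : ℝ) :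
    dist (axisRay ξ hξ t : ℂ) (axisRay η hη t) = |ξ - η| := by
  have hsq : (ξ * tanh t - η * tanh t) ^ 2 + (ξ / cosh t - η / cosh t) ^ 2 = (ξ - η) ^ 2 := by
    rw [tanh_eq_sinh_div_cosh]
    field_simp
    linear_combination -(ξ - η) ^ 2 * cosh_sq' t
  rw [Complex.dist_eq_re_im]
  exact (congrArg Real.sqrt hsq).trans (sqrt_sq_eq_abs _)

lemma dist_axisRay (ξ η : ℝ) (hξ : 0 < ξ) (hη : 0 < η) (t : ℝ) :
    dist (axisRay ξ hξ t) (axisRay η hη t) =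
      2 * arsinh (|ξ - η| / (2 * √(ξ * η)) * cosh t) := by
  have him : (axisRay ξ hξ t).im * (axisRay η hη t).im = ξ * η / cosh t ^ 2 := by
    change ξ / cosh t * (η / cosh t) = _
    ring
  rw [UpperHalfPlane.dist_eq, dist_coe_axisRay, him, sqrt_div' _ (sq_nonneg _),
    sqrt_sq (cosh_pos t).le]
  congr 2
  field_simp

theorem dC_eq_sinh_half_dist_proj_general
    (ξ η : ℝ) (hξ : 0 < ξ) (hη : 0 < η) :
    Tendsto (fun t : ℝ => Real.exp (dist (axisRay ξ hξ t) (axisRay η hη t) / 2 - t))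
      atTop
      (nhds (Real.sinh (dist (axisPoint ξ hξ) (axisPoint η hη) / 2))) := by
  rw [← axisRay_zero ξ hξ, ← axisRay_zero η hη]
  simp only [dist_axisRay, cosh_zero, mul_one, ne_eq, OfNat.ofNat_ne_zero, not_false_eq_true,
    mul_div_cancel_left₀, sinh_arsinh]
  exact tendsto_exp_arsinh_mul_cosh_sub_atTop (by positivity)

/-- In the hyperbolic plane `ℍ²` with `C` the geodesic line given by the imaginary axis,
for two distinct boundary points `ξ, η` in the same component of `∂ℍ² \ ∂C` (here both
positive reals), the distance-like map
`d_C(ξ,η) = lim_{t→∞} e^{(1/2)d(ξ_t,η_t) − t}` — where `ξ_t, η_t` are the geodesic rays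
from the projections `π_C(ξ) = iξ`, `π_C(η) = iη` to `ξ, η` — equals
`sinh(d(π_C(ξ), π_C(η))/2)`. -/
theorem dC_eq_sinh_half_dist_proj
    (ξ η : ℝ) (hξ : 0 < ξ) (hη : 0 < η) (hne : ξ ≠ η) :
    Tendsto (fun t : ℝ => Real.exp (dist (axisRay ξ hξ t) (axisRay η hη t) / 2 - t))
      atTop
      (nhds (Real.sinh (dist (axisPoint ξ hξ) (axisPoint η hη) / 2))) :=
  dC_eq_sinh_half_dist_proj_general ξ η hξ hη
end

section
/- Let X be a proper CAT(−1) geodesic metric space and C a nonempty closed convex subset. For all ξ, η ∈ ∂_∞X \ ∂_∞C, one has d_C(ξ,η) ≤ e^{(1/2)·d(π_C(ξ), π_C(η))}. -/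
open Filter

theorem dist_sub_add_dist_le_dist {α : Type*} [PseudoMetricSpace α] (x y p q : α) :
    dist x y - (dist x p + dist y q) ≤ dist p q := by
  linarith [dist_triangle4 x p q y, dist_comm q y]

theorem dC_le_exp_half_dist_proj_general
    {X : Type*} [MetricSpace X] (pξ pη : X)
    (ξr ηr : ℝ → X)
    (LC : ℝ)
    (hC : Tendsto (fun t : ℝ => Real.exp
      (dist (ξr t) (ηr t) / 2 - (dist (ξr t) pξ + dist (ηr t) pη) / 2)) atTop (nhds LC)) :
    LC ≤ Real.exp (dist pξ pη / 2) :=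
  le_of_tendsto' hC fun t => Real.exp_le_exp.2 <| by
    linarith [dist_sub_add_dist_le_dist (ξr t) (ηr t) pξ pη]

/-- Upper bound for the distance-like map: with `pξ = π_C(ξ)`, `pη = π_C(η)` the
closest-point projections of `ξ, η ∈ ∂_∞X \ ∂_∞C`, `x₀` the midpoint of `[pξ, pη]`
(which exists as `X` is geodesic), `ξr, ηr` unit-speed geodesic rays from `pξ, pη`
converging to `ξ, η`, and `LC = d_C(ξ,η)` the defining limit, one has
`d_C(ξ,η) ≤ e^{(1/2)·d(π_C(ξ),π_C(η))}`. -/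
theorem dC_le_exp_half_dist_proj
    {X : Type*} [MetricSpace X] (pξ pη x₀ : X)
    (hmid₁ : dist pξ x₀ = dist pξ pη / 2) (hmid₂ : dist pη x₀ = dist pξ pη / 2)
    (ξr ηr : ℝ → X) (hξ0 : ξr 0 = pξ) (hη0 : ηr 0 = pη)
    (hξray : ∀ s t : ℝ, 0 ≤ s → 0 ≤ t → dist (ξr s) (ξr t) = |s - t|)
    (hηray : ∀ s t : ℝ, 0 ≤ s → 0 ≤ t → dist (ηr s) (ηr t) = |s - t|)
    (LC : ℝ)
    (hC : Tendsto (fun t : ℝ => Real.exp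
      (dist (ξr t) (ηr t) / 2 - (dist (ξr t) pξ + dist (ηr t) pη) / 2)) atTop (nhds LC)) :
    LC ≤ Real.exp (dist pξ pη / 2) :=
  dC_le_exp_half_dist_proj_general pξ pη ξr ηr LC hC
end
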